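/- Let r = [a₁,a₂]·[a₃,a₄]⁻¹ ∈ F, where [x,y] = x·y·x⁻¹·y⁻¹. For every quadruple ε = (ε₁, ε₂, ε₃, ε₄) with each εᵢ ∈ {+1, −1} and every integer n, the element Φ_{ε,n}(r) is conjugate in F to r; hence Φ_{ε,n} maps the normal closure of {r} to itself and descends to an automorphism of the genus-two surface group F/⟨⟨r⟩⟩. -/

import Mathlib

/-! `F` is the free group on four generators `a₁, a₂, a₃, a₄`;
here `a 0 = a₁`, `a 1 = a₂`, `a 2 = a₃`, `a 3 = a₄`. -/

abbrev F : Type := FreeGroup (Fin 4)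

def a (i : Fin 4) : F := FreeGroup.of i

/-- `Δ i ε` is the endomorphism `Δ_{i+1}^ε` of `F` induced by the `ε`-th power of the
Dehn twist `D_{i+1}` (the index is shifted by one): `Δ 0 ε = Δ₁^ε`, …, `Δ 4 ε = Δ₅^ε`. -/
def Δ : Fin 5 → ℤ → (F →* F) := fun i ε =>
  FreeGroup.lift (![
    ![a 0, a 1 * a 0 ^ ε, a 2, a 3],
    ![a 0 * a 1 ^ (-ε), a 1, a 2, a 3],
    ![a 0, ((a 2)⁻¹ * a 0) ^ ε * a 1, a 2, ((a 2)⁻¹ * a 0) ^ ε * a 3],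
    ![a 0, a 1, a 2 * a 3 ^ ε, a 3],
    ![a 0, a 1, a 2, a 3 * a 2 ^ (-ε)]] i)

lemma Δ_inv_comp (i : Fin 5) (ε : ℤ) :
    (Δ i (-ε)).comp (Δ i ε) = MonoidHom.id F := by
  apply FreeGroup.ext_hom
  intro j
  fin_cases i <;> fin_cases j <;>
    simp [Δ, a, MonoidHom.comp_apply]

/-- `Δ i ε` as an automorphism of `F` (its inverse is `Δ i (-ε)`). -/
def Δaut (i : Fin 5) (ε : ℤ) : F ≃* F where
  toFun := Δ i ε
  invFun := Δ i (-ε)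
  left_inv := fun x => by
    simpa using congrArg (fun f : F →* F => f x) (Δ_inv_comp i ε)
  right_inv := fun x => by
    have h := congrArg (fun f : F →* F => f x) (Δ_inv_comp i (-ε))
    rw [neg_neg] at h
    simpa using h
  map_mul' := map_mul _

/-- The automorphism `Φ_{ε,n} = Δ₂^{ε₂} ∘ Δ₁^{ε₁} ∘ Δ₃^{ε₃} ∘ Δ₄^{ε₄} ∘ (Δ₅^{+1})^n` of `F`
(multiplication of automorphisms is composition). -/
def Φ (ε₁ ε₂ ε₃ ε₄ n : ℤ) : F ≃* F :=
  Δaut 1 ε₂ * Δaut 0 ε₁ * Δaut 2 ε₃ * Δaut 3 ε₄ * (Δaut 4 1) ^ n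

/-- The surface relator `r = [a₁,a₂]·[a₃,a₄]⁻¹`. -/
def r : F := (a 0 * a 1 * (a 0)⁻¹ * (a 1)⁻¹) * (a 2 * a 3 * (a 2)⁻¹ * (a 3)⁻¹)⁻¹

/-! Each twist `Δᵢ^ε` with `i ≠ 3` fixes `r`: it multiplies one generator of a commutator pair
on the right by a power of the other one, which does not change that commutator. The twist
`Δ₃^ε` conjugates `r` by `(a₁a₃⁻¹)^ε`, since `a₁ (a₃⁻¹a₁)^ε a₁⁻¹ = (a₁a₃⁻¹)^ε`. An automorphism
sending `r` to a conjugate maps `⟨⟨r⟩⟩` onto itself, hence descends to the quotient. -/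

theorem Subgroup.normalClosure_singleton_eq_of_isConj {G : Type*} [Group G] {x y : G}
    (h : IsConj x y) : Subgroup.normalClosure {x} = Subgroup.normalClosure {y} := by
  simp only [Subgroup.normalClosure, Group.conjugatesOfSet, Set.biUnion_singleton,
    h.conjugatesOf_eq]

theorem Subgroup.map_normalClosure_singleton_of_isConj {G : Type*} [Group G] {x : G}
    (e : G ≃* G) (h : IsConj x (e x)) :
    (Subgroup.normalClosure {x}).map (e : G →* G) = Subgroup.normalClosure {x} := by
  rw [Subgroup.map_normalClosure _ _ e.surjective, Set.image_singleton,
    MonoidHom.coe_coe, Subgroup.normalClosure_singleton_eq_of_isConj h.symm]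

theorem MulAut.zpow_apply_eq_self_of_apply_eq_self {M : Type*} [Mul M] {e : MulAut M} {x : M}
    (h : e x = x) (n : ℤ) : (e ^ n) x = x := by
  have := Equiv.Perm.zpow_apply_eq_self_of_apply_eq_self (f := MulAut.toPerm M e) h n
  rwa [← map_zpow] at this

theorem Δ_apply_r_of_ne_two (i : Fin 5) (hi : i ≠ 2) (ε : ℤ) : Δ i ε r = r := by
  fin_cases i
  all_goals first
    | exact absurd rfl hi
    | simp [Δ, r, a]; group

theorem Δ_two_apply_r (ε : ℤ) :
    Δ 2 ε r = (a 0 * (a 2)⁻¹) ^ ε * r * ((a 0 * (a 2)⁻¹) ^ ε)⁻¹ := by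
  set c := (a 2)⁻¹ * a 0 with hc
  have hΔ : ∀ j, Δ 2 ε (a j) = ![a 0, c ^ ε * a 1, a 2, c ^ ε * a 3] j := fun _ =>
    FreeGroup.lift_apply_of
  have hd : (a 0 * (a 2)⁻¹) ^ ε = a 0 * c ^ ε * (a 0)⁻¹ := by
    rw [← conj_zpow, hc]; group
  have ha2 : a 2 = a 0 * c⁻¹ := by rw [hc]; group
  simp only [r, map_mul, map_inv, hΔ, hd, Matrix.cons_val]
  rw [ha2]
  group

theorem isConj_Φ_apply_r (ε₁ ε₂ ε₃ ε₄ n : ℤ) : IsConj r (Φ ε₁ ε₂ ε₃ ε₄ n r) := by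
  have hfix := Δ_apply_r_of_ne_two
  have hpow : (Δaut 4 1 ^ n) r = r :=
    MulAut.zpow_apply_eq_self_of_apply_eq_self (hfix 4 (by decide) 1) n
  have hΔ₃ : IsConj r (Δ 2 ε₃ r) := isConj_iff.2 ⟨_, (Δ_two_apply_r ε₃).symm⟩
  have h := (Δ 1 ε₂).map_isConj ((Δ 0 ε₁).map_isConj hΔ₃)
  rw [hfix 0 (by decide), hfix 1 (by decide)] at h
  change IsConj r (Δ 1 ε₂ (Δ 0 ε₁ (Δ 2 ε₃ (Δ 3 ε₄ ((Δaut 4 1 ^ n) r)))))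
  rwa [hpow, hfix 3 (by decide)]

theorem phi_preserves_relator_general (ε₁ ε₂ ε₃ ε₄ : ℤ) (n : ℤ) :
    IsConj r (Φ ε₁ ε₂ ε₃ ε₄ n r) ∧
    (∀ x ∈ Subgroup.normalClosure {r},
      Φ ε₁ ε₂ ε₃ ε₄ n x ∈ Subgroup.normalClosure {r}) ∧
    ∃ ψ : (F ⧸ Subgroup.normalClosure {r}) ≃* (F ⧸ Subgroup.normalClosure {r}),
      ∀ x : F, ψ (QuotientGroup.mk x) = QuotientGroup.mk (Φ ε₁ ε₂ ε₃ ε₄ n x) := by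
  have hconj := isConj_Φ_apply_r ε₁ ε₂ ε₃ ε₄ n
  have hmap := Subgroup.map_normalClosure_singleton_of_isConj (Φ ε₁ ε₂ ε₃ ε₄ n) hconj
  exact ⟨hconj, fun x hx => hmap ▸ Subgroup.mem_map_of_mem _ hx,
    QuotientGroup.congr _ _ _ hmap, fun _ => rfl⟩

/-- `Φ_{ε,n}` sends the surface relator `r` to a conjugate of `r`; in particular it
preserves the normal closure of `{r}` and descends to an automorphism of the genus-two
surface group `F/⟨⟨r⟩⟩`. -/
theorem phi_preserves_relator (ε₁ ε₂ ε₃ ε₄ : ℤ)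
    (h₁ : ε₁ = 1 ∨ ε₁ = -1) (h₂ : ε₂ = 1 ∨ ε₂ = -1)
    (h₃ : ε₃ = 1 ∨ ε₃ = -1) (h₄ : ε₄ = 1 ∨ ε₄ = -1) (n : ℤ) :
    IsConj r (Φ ε₁ ε₂ ε₃ ε₄ n r) ∧
    (∀ x ∈ Subgroup.normalClosure {r},
      Φ ε₁ ε₂ ε₃ ε₄ n x ∈ Subgroup.normalClosure {r}) ∧
    ∃ ψ : (F ⧸ Subgroup.normalClosure {r}) ≃* (F ⧸ Subgroup.normalClosure {r}),
      ∀ x : F, ψ (QuotientGroup.mk x) = QuotientGroup.mk (Φ ε₁ ε₂ ε₃ ε₄ n x) :=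
  phi_preserves_relator_general ε₁ ε₂ ε₃ ε₄ n
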